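/- There exists a constant C > 0 such that for all real t ≥ 1, all k ∈ ℤ with k ≠ 0, and all ℓ ∈ ℤ, one has ∫_{t/2}^{t} (1 + (kt − ℓτ)²)^{−1/2} dτ ≤ C·(1 + ℓ²)^{−1/2}·(1 + log⟨t⟩ + log⟨k⟩ + log⟨k−ℓ⟩), where ⟨x⟩ := (1 + x²)^{1/2}. -/

import Mathlib

noncomputable section

/-- The Japanese bracket `⟨x⟩ = (1 + x²)^{1/2}`. -/
def jb (x : ℝ) : ℝ := Real.sqrt (1 + x ^ 2)

lemma jb_pos (x : ℝ) : 0 < jb x := Real.sqrt_pos.2 (by positivity)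

lemma one_le_jb (x : ℝ) : 1 ≤ jb x := by
  exact Real.le_sqrt_of_sq_le (by nlinarith)

lemma rpow_neg_half_eq (X : ℝ) :
    (1 + X ^ 2) ^ (-(1 / 2) : ℝ) = (Real.sqrt (1 + X ^ 2))⁻¹ := by
  rw [Real.sqrt_eq_rpow, ← Real.rpow_neg (by positivity)]

lemma jb_mul_le (x y : ℝ) : jb (x * y) ≤ jb x * jb y := by
  rw [jb, jb, jb, ← Real.sqrt_mul (by positivity)]
  exact Real.sqrt_le_sqrt (by nlinarith [sq_nonneg x, sq_nonneg y])

lemma jb_avg_le (x y : ℝ) : jb ((x + y) / 2) ≤ jb x * jb y := by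
  rw [jb, jb, jb, ← Real.sqrt_mul (by positivity)]
  exact Real.sqrt_le_sqrt (by nlinarith [sq_nonneg (x - y), sq_nonneg (x*y)])

lemma arsinh_le (x : ℝ) : Real.arsinh x ≤ Real.log 2 + Real.log (Real.sqrt (1 + x ^ 2)) := by
  have hs : (0:ℝ) < Real.sqrt (1 + x ^ 2) := Real.sqrt_pos.2 (by positivity)
  have hx : x ≤ Real.sqrt (1 + x ^ 2) := Real.le_sqrt_of_sq_le (by nlinarith)
  have hpos : 0 < x + Real.sqrt (1 + x ^ 2) := by
    have h2 : -x < Real.sqrt (1 + x ^ 2) := Real.lt_sqrt_of_sq_lt (by nlinarith)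
    linarith
  calc Real.arsinh x = Real.log (x + Real.sqrt (1 + x ^ 2)) := rfl
    _ ≤ Real.log (2 * Real.sqrt (1 + x ^ 2)) :=
        Real.log_le_log hpos (by linarith)
    _ = Real.log 2 + Real.log (Real.sqrt (1 + x ^ 2)) :=
        Real.log_mul two_ne_zero hs.ne'

lemma abs_arsinh_le (x : ℝ) : |Real.arsinh x| ≤ Real.log 2 + Real.log (jb x) := by
  rw [abs_le]
  constructor
  · have := arsinh_le (-x)
    rw [Real.arsinh_neg, neg_sq] at this
    rw [jb]; linarith
  · have := arsinh_le x
    rw [jb]; linarith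

lemma ftc_arsinh (a b c l : ℝ) (hl : l ≠ 0) :
    (∫ τ in a..b, (Real.sqrt (1 + (c - l * τ) ^ 2))⁻¹)
      = l⁻¹ * (Real.arsinh (c - l * a) - Real.arsinh (c - l * b)) := by
  have h : ∀ τ : ℝ, HasDerivAt (fun s => -(l⁻¹ * Real.arsinh (c - l * s)))
      ((Real.sqrt (1 + (c - l * τ) ^ 2))⁻¹) τ := by
    intro τ
    have h1 : HasDerivAt (fun s : ℝ => c - l * s) (-l) τ := by
      simpa using ((hasDerivAt_id τ).const_mul l).const_sub c
    have h2 := (Real.hasDerivAt_arsinh (c - l * τ)).comp τ h1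
    have h3 := (h2.const_mul l⁻¹).neg
    have e : (Real.sqrt (1 + (c - l * τ) ^ 2))⁻¹
        = -(l⁻¹ * ((Real.sqrt (1 + (c - l * τ) ^ 2))⁻¹ * -l)) := by
      field_simp
    rw [e]; exact h3
  have hc : Continuous fun τ : ℝ => (Real.sqrt (1 + (c - l * τ) ^ 2))⁻¹ := by
    apply Continuous.inv₀
    · fun_prop
    · intro τ
      exact (Real.sqrt_pos.2 (by positivity)).ne'
  rw [intervalIntegral.integral_eq_sub_of_hasDerivAt (fun τ _ => h τ)
    (hc.intervalIntegrable a b)]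
  ring

/-- Resonance-kernel time integral bound on `[t/2, t]`: there is `C > 0` such that for
all `t ≥ 1`, `k ∈ ℤ \ {0}` and `ℓ ∈ ℤ`,
`∫_{t/2}^t ⟨kt − ℓτ⟩⁻¹ dτ ≤ C·⟨ℓ⟩⁻¹·(1 + log⟨t⟩ + log⟨k⟩ + log⟨k−ℓ⟩)`. -/
theorem resonance_kernel_late_time :
    ∃ C : ℝ, 0 < C ∧ ∀ t : ℝ, 1 ≤ t → ∀ k : ℤ, k ≠ 0 → ∀ ℓ : ℤ,
      (∫ τ in (t / 2)..t, (1 + ((k : ℝ) * t - (ℓ : ℝ) * τ) ^ 2) ^ (-(1 / 2) : ℝ))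
        ≤ C * (1 + (ℓ : ℝ) ^ 2) ^ (-(1 / 2) : ℝ) *
            (1 + Real.log (jb t) + Real.log (jb (k : ℝ))
              + Real.log (jb ((k : ℝ) - (ℓ : ℝ)))) := by
  refine ⟨8, by norm_num, ?_⟩
  intro t ht k hk ℓ
  have ht0 : 0 < t := lt_of_lt_of_le one_pos ht
  set K : ℝ := (k : ℝ)
  set L : ℝ := (ℓ : ℝ)
  set J : ℝ := jb t * jb K * jb (K - L) with hJ
  have hJpos : 0 < J := by
    rw [hJ]; exact mul_pos (mul_pos (jb_pos _) (jb_pos _)) (jb_pos _)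
  have hlogt : 0 ≤ Real.log (jb t) := Real.log_nonneg (one_le_jb t)
  have hlogk : 0 ≤ Real.log (jb K) := Real.log_nonneg (one_le_jb K)
  have hlogkl : 0 ≤ Real.log (jb (K - L)) := Real.log_nonneg (one_le_jb (K - L))
  have hlogJ : Real.log J = Real.log (jb t) + Real.log (jb K) + Real.log (jb (K - L)) := by
    rw [hJ, Real.log_mul (mul_pos (jb_pos t) (jb_pos K)).ne' (jb_pos _).ne',
      Real.log_mul (jb_pos _).ne' (jb_pos _).ne']
  -- rewrite integrand
  have hint : (∫ τ in (t / 2)..t, (1 + (K * t - L * τ) ^ 2) ^ (-(1 / 2) : ℝ))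
      = ∫ τ in (t / 2)..t, (Real.sqrt (1 + (K * t - L * τ) ^ 2))⁻¹ := by
    simp only [rpow_neg_half_eq]
  have hRHS : (1 + L ^ 2) ^ (-(1 / 2) : ℝ) = (jb L)⁻¹ := by
    rw [rpow_neg_half_eq]; rfl
  rw [hint, hRHS]
  have hlog2 : Real.log 2 ≤ 1 := by
    have := Real.log_le_sub_one_of_pos (two_pos (α := ℝ))
    linarith
  rcases eq_or_ne ℓ 0 with rfl | hl
  · -- ℓ = 0 : constant integrand
    have hL0 : L = 0 := by simp [L]
    have hk1 : (1:ℝ) ≤ |K| := by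
      have := Int.one_le_abs hk
      calc (1:ℝ) ≤ (|k| : ℤ) := by exact_mod_cast this
        _ = |K| := by simp [K]
    have hKt : t ≤ Real.sqrt (1 + (K * t) ^ 2) := by
      have h1 : |K * t| ≤ Real.sqrt (1 + (K * t) ^ 2) := by
        rw [show (1:ℝ) + (K*t)^2 = (K*t)^2 + 1 by ring]
        calc |K * t| = Real.sqrt ((K*t)^2) := (Real.sqrt_sq_eq_abs _).symm
          _ ≤ _ := Real.sqrt_le_sqrt (by linarith)
      have h2 : t ≤ |K * t| := by
        rw [abs_mul, abs_of_pos ht0]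
        nlinarith [abs_nonneg K]
      linarith
    have hval : (∫ τ in (t / 2)..t, (Real.sqrt (1 + (K * t - L * τ) ^ 2))⁻¹)
        = (t - t/2) * (Real.sqrt (1 + (K * t) ^ 2))⁻¹ := by
      simp [hL0]
    rw [hval]
    have hs : 0 < Real.sqrt (1 + (K * t) ^ 2) := Real.sqrt_pos.2 (by positivity)
    have hb : (t - t/2) * (Real.sqrt (1 + (K * t) ^ 2))⁻¹ ≤ 1 := by
      have h1 : t * (Real.sqrt (1 + (K * t) ^ 2))⁻¹ ≤ 1 := by
        calc t * (Real.sqrt (1 + (K * t) ^ 2))⁻¹ ≤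
            Real.sqrt (1 + (K * t) ^ 2) * (Real.sqrt (1 + (K * t) ^ 2))⁻¹ :=
              mul_le_mul_of_nonneg_right hKt (by positivity)
          _ = 1 := mul_inv_cancel₀ hs.ne'
      have h2 : (t - t/2) * (Real.sqrt (1 + (K * t) ^ 2))⁻¹
          = (t * (Real.sqrt (1 + (K * t) ^ 2))⁻¹) / 2 := by ring
      linarith
    have hjbL : jb L = 1 := by simp [hL0, jb]
    rw [hjbL]
    have : (1:ℝ) ≤ 8 * 1⁻¹ * (1 + Real.log (jb t) + Real.log (jb K) + Real.log (jb (K - L))) := by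
      rw [inv_one, mul_one]
      nlinarith
    linarith
  · -- ℓ ≠ 0
    have hL : L ≠ 0 := Int.cast_ne_zero.2 hl
    have hL1 : (1:ℝ) ≤ |L| := by
      have := Int.one_le_abs hl
      calc (1:ℝ) ≤ (|ℓ| : ℤ) := by exact_mod_cast this
        _ = |L| := by simp [L]
    rw [ftc_arsinh (t/2) t (K*t) L hL]
    set A := Real.arsinh (K * t - L * (t/2))
    set B := Real.arsinh (K * t - L * t)
    -- bounds on the brackets
    have hu1 : jb (K * t - L * (t/2)) ≤ J ^ 2 := by
      have h0 : K * t - L * (t/2) = (K * t + (K - L) * t) / 2 := by ring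
      rw [h0]
      calc jb ((K * t + (K - L) * t) / 2) ≤ jb (K * t) * jb ((K - L) * t) := jb_avg_le _ _
        _ ≤ (jb K * jb t) * (jb (K - L) * jb t) := by
            exact mul_le_mul (jb_mul_le _ _) (jb_mul_le _ _) (jb_pos _).le
              (mul_pos (jb_pos K) (jb_pos t)).le
        _ ≤ J ^ 2 := by
            rw [hJ]
            nlinarith [jb_pos t, jb_pos K, jb_pos (K - L), one_le_jb K, one_le_jb (K - L),
              mul_pos (mul_pos (jb_pos t) (jb_pos t)) (mul_pos (jb_pos K) (jb_pos (K - L))),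
              mul_le_mul (one_le_jb K) (one_le_jb (K - L)) zero_le_one (jb_pos K).le]
    have hu2 : jb (K * t - L * t) ≤ J := by
      have h0 : K * t - L * t = (K - L) * t := by ring
      rw [h0]
      calc jb ((K - L) * t) ≤ jb (K - L) * jb t := jb_mul_le _ _
        _ ≤ J := by
            rw [hJ]
            nlinarith [jb_pos t, jb_pos K, jb_pos (K - L), one_le_jb K, one_le_jb t, one_le_jb (K - L)]
    have hA : |A| ≤ 1 + 2 * Real.log J := by
      calc |A| ≤ Real.log 2 + Real.log (jb (K * t - L * (t/2))) := abs_arsinh_le _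
        _ ≤ 1 + Real.log (J ^ 2) := by
            have := Real.log_le_log (jb_pos _) hu1
            linarith
        _ = 1 + 2 * Real.log J := by rw [Real.log_pow]; push_cast; ring
    have hB : |B| ≤ 1 + Real.log J := by
      calc |B| ≤ Real.log 2 + Real.log (jb (K * t - L * t)) := abs_arsinh_le _
        _ ≤ 1 + Real.log J := by
            have := Real.log_le_log (jb_pos _) hu2
            linarith
    have hlogJ0 : 0 ≤ Real.log J := by rw [hlogJ]; linarith
    -- |ℓ|⁻¹ ≤ 2 (jb L)⁻¹
    have hLpos : (0:ℝ) < |L| := lt_of_lt_of_le one_pos hL1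
    have hjbL : jb L ≤ 2 * |L| := by
      rw [jb]
      calc Real.sqrt (1 + L ^ 2) ≤ Real.sqrt ((2 * |L|) ^ 2) :=
          Real.sqrt_le_sqrt (by nlinarith [sq_abs L])
        _ = 2 * |L| := Real.sqrt_sq (by positivity)
    have hLinv : |L|⁻¹ ≤ 2 * (jb L)⁻¹ := by
      rw [inv_eq_one_div, show 2 * (jb L)⁻¹ = 2 / jb L by rw [div_eq_mul_inv],
        div_le_div_iff₀ hLpos (jb_pos L), one_mul]
      exact hjbL
    have h1 : L⁻¹ * (A - B) ≤ |L|⁻¹ * (|A| + |B|) := by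
      calc L⁻¹ * (A - B) ≤ |L⁻¹ * (A - B)| := le_abs_self _
        _ = |L|⁻¹ * |A - B| := by rw [abs_mul, abs_inv]
        _ ≤ |L|⁻¹ * (|A| + |B|) := by
            have : |A - B| ≤ |A| + |B| := by simpa using abs_sub_le A 0 B
            exact mul_le_mul_of_nonneg_left this (by positivity)
    have h2 : |A| + |B| ≤ 4 * (1 + Real.log J) := by linarith
    have h3 : |L|⁻¹ * (|A| + |B|) ≤ |L|⁻¹ * (4 * (1 + Real.log J)) :=
      mul_le_mul_of_nonneg_left h2 (by positivity)
    have h4 : |L|⁻¹ * (4 * (1 + Real.log J)) ≤ (2 * (jb L)⁻¹) * (4 * (1 + Real.log J)) :=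
      mul_le_mul_of_nonneg_right hLinv (by positivity)
    have h5 : (2 * (jb L)⁻¹) * (4 * (1 + Real.log J))
        = 8 * (jb L)⁻¹ * (1 + Real.log (jb t) + Real.log (jb K) + Real.log (jb (K - L))) := by
      rw [hlogJ]; ring
    linarith
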